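/- Let S and A be real symmetric p×p matrices and η > 0, and let (1/η)A − S = QΛQᵀ with Q orthogonal and Λ = diag(λ₁, …, λ_p). Define Θ* = Q·diag(v₁, …, v_p)·Qᵀ with v_j = η(λ_j + √(λ_j² + 4/η))/2. Then Θ* minimizes the function f(Θ) = trace(SΘ) − log det Θ + (1/(2η))‖Θ − A‖_F² over all real symmetric positive definite p×p matrices Θ; that is, f(Θ*) ≤ f(Θ) for every symmetric positive definite Θ. -/

import Mathlib

/-!
The objective is convex on the positive definite cone, so it suffices that `Θ*` is positive
definite and satisfies the first-order condition `Θ*⁻¹ = S + (Θ* - A)/η`. Convexity enters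
through two tangent-line bounds: `log det Θ ≤ log det Θ* + tr(Θ*⁻¹(Θ - Θ*))`, which after the
congruence `Θ*^{-1/2} Θ Θ*^{-1/2}` is `log x ≤ x - 1` on the eigenvalues, and the expansion of
the squared Frobenius norm. Diagonalising in the basis `Q`, the first-order condition reduces to
the scalar equation `x⁻¹ = x/η - λⱼ`, whose positive root is `vⱼ`.
-/

open Matrix

-- The positive root of `x² - ηλx - η = 0`, i.e. of `x⁻¹ = x/η - λ`.
noncomputable def admmRoot (η l : ℝ) : ℝ :=
  η * (l + √(l ^ 2 + 4 / η)) / 2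

theorem admmRoot_pos {η : ℝ} (hη : 0 < η) (l : ℝ) : 0 < admmRoot η l := by
  have habs : |l| < √(l ^ 2 + 4 / η) :=
    (Real.lt_sqrt (abs_nonneg l)).mpr (by rw [sq_abs]; linarith [div_pos four_pos hη])
  have : 0 < l + √(l ^ 2 + 4 / η) := by linarith [neg_abs_le l]
  unfold admmRoot
  positivity

theorem inv_admmRoot {η : ℝ} (hη : 0 < η) (l : ℝ) : (admmRoot η l)⁻¹ = admmRoot η l / η - l := by
  refine inv_eq_of_mul_eq_one_right ?_
  have hsq : √(l ^ 2 + 4 / η) ^ 2 = l ^ 2 + 4 / η := Real.sq_sqrt (by positivity)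
  unfold admmRoot
  generalize √(l ^ 2 + 4 / η) = t at hsq ⊢
  field_simp at hsq ⊢
  linear_combination hsq

section

variable {n : Type*} [Fintype n]

theorem Matrix.trace_mul_eq_sum_mul_of_isSymm {α : Type*} [NonUnitalNonAssocSemiring α]
    (X : Matrix n n α) {Y : Matrix n n α} (hY : Y.IsSymm) :
    trace (X * Y) = ∑ i, ∑ j, X i j * Y i j := by
  simp only [trace, diag, mul_apply]
  refine Finset.sum_congr rfl fun i _ => Finset.sum_congr rfl fun j _ => ?_
  rw [hY.apply]

theorem Matrix.sum_sq_add_two_mul_trace_le (X : Matrix n n ℝ) {Y : Matrix n n ℝ} (hY : Y.IsSymm) :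
    ∑ i, ∑ j, X i j ^ 2 + 2 * trace (X * Y) ≤ ∑ i, ∑ j, (X + Y) i j ^ 2 := by
  rw [trace_mul_eq_sum_mul_of_isSymm X hY, Finset.mul_sum, ← Finset.sum_add_distrib]
  refine Finset.sum_le_sum fun i _ => ?_
  rw [Finset.mul_sum, ← Finset.sum_add_distrib]
  refine Finset.sum_le_sum fun j _ => ?_
  rw [add_apply]
  nlinarith [sq_nonneg (Y i j)]

variable [DecidableEq n]

theorem Matrix.PosDef.log_det_le_trace_sub_card {W : Matrix n n ℝ} (hW : W.PosDef) :
    Real.log W.det ≤ trace W - Fintype.card n := by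
  have hpos := hW.eigenvalues_pos
  rw [hW.1.det_eq_prod_eigenvalues, hW.1.trace_eq_sum_eigenvalues]
  simp only [RCLike.ofReal_real_eq_id, id]
  rw [Real.log_prod fun i _ => (hpos i).ne']
  calc ∑ i, Real.log (hW.1.eigenvalues i) ≤ ∑ i, (hW.1.eigenvalues i - 1) :=
        Finset.sum_le_sum fun i _ => Real.log_le_sub_one_of_pos (hpos i)
    _ = ∑ i, hW.1.eigenvalues i - Fintype.card n := by simp [Finset.sum_sub_distrib]

open scoped MatrixOrder in
theorem Matrix.PosDef.log_det_le_log_det_add_trace {B C : Matrix n n ℝ} (hB : B.PosDef)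
    (hC : C.PosDef) :
    Real.log B.det ≤ Real.log C.det + trace (C⁻¹ * (B - C)) := by
  set R := CFC.sqrt C⁻¹
  have hRR : R * R = C⁻¹ := CFC.sqrt_mul_sqrt_self _ hC.inv.posSemidef.nonneg
  have hRsymm : Rᴴ = R := (CFC.sqrt_nonneg _).posSemidef.1
  have hRunit : IsUnit R := isUnit_of_mul_isUnit_left (hRR ▸ hC.inv.isUnit)
  have hW : (R * B * R).PosDef := by
    simpa only [hRsymm] using hB.mul_mul_conjTranspose_same (vecMul_injective_of_isUnit hRunit)
  have hdet : (R * B * R).det = C.det⁻¹ * B.det := by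
    rw [det_mul, det_mul, mul_right_comm, ← det_mul, hRR, det_nonsing_inv, Ring.inverse_eq_inv']
  have htrace : trace (R * B * R) = trace (C⁻¹ * B) := by
    rw [trace_mul_comm, ← Matrix.mul_assoc, hRR]
  have hlog := hW.log_det_le_trace_sub_card
  rw [hdet, htrace, Real.log_mul (inv_ne_zero hC.det_pos.ne') hB.det_pos.ne', Real.log_inv] at hlog
  rw [Matrix.mul_sub, trace_sub, nonsing_inv_mul C ((isUnit_iff_isUnit_det C).mp hC.isUnit),
    trace_one]
  linarith

theorem Matrix.posDef_mul_diagonal_mul_transpose {Q : Matrix n n ℝ} (hQ' : Q * Qᵀ = 1)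
    {d : n → ℝ} (hd : ∀ i, 0 < d i) : (Q * diagonal d * Qᵀ).PosDef := by
  simpa using (posDef_diagonal_iff.mpr hd).mul_mul_conjTranspose_same
    (vecMul_injective_of_isUnit (IsUnit.of_mul_eq_one Qᵀ hQ'))

theorem Matrix.inv_mul_diagonal_mul_transpose {Q : Matrix n n ℝ} (hQ : Qᵀ * Q = 1)
    (hQ' : Q * Qᵀ = 1) {d : n → ℝ} (hd : ∀ i, d i ≠ 0) :
    (Q * diagonal d * Qᵀ)⁻¹ = Q * diagonal d⁻¹ * Qᵀ := by
  refine inv_eq_right_inv ?_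
  calc Q * diagonal d * Qᵀ * (Q * diagonal d⁻¹ * Qᵀ)
      = Q * (diagonal d * (Qᵀ * Q) * diagonal d⁻¹) * Qᵀ := by simp only [Matrix.mul_assoc]
    _ = 1 := by
      rw [hQ, Matrix.mul_one, diagonal_mul_diagonal]
      simp [mul_inv_cancel₀ (hd _), hQ']

noncomputable def admmObjective (S A : Matrix n n ℝ) (η : ℝ) (Θ : Matrix n n ℝ) : ℝ :=
  trace (S * Θ) - Real.log Θ.det + 1 / (2 * η) * ∑ i, ∑ j, (Θ i j - A i j) ^ 2

theorem isMinOn_admmObjective_of_inv_eq {S A Θ' : Matrix n n ℝ} {η : ℝ} (hη : 0 < η)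
    (hΘ' : Θ'.PosDef) (hstat : Θ'⁻¹ = S + (1 / η) • (Θ' - A)) :
    IsMinOn (admmObjective S A η) {Θ | Θ.PosDef} Θ' := by
  rw [isMinOn_iff]
  intro Θ (hΘ : Θ.PosDef)
  have hlog := hΘ.log_det_le_log_det_add_trace hΘ'
  have hfrob := sum_sq_add_two_mul_trace_le (Θ' - A) (isHermitian_iff_isSymm.mp (hΘ.1.sub hΘ'.1))
  rw [sub_add_sub_cancel'] at hfrob
  simp only [Matrix.sub_apply] at hfrob
  have hlin : trace (S * Θ) = trace (S * Θ') + trace (S * (Θ - Θ')) := by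
    rw [← trace_add, ← Matrix.mul_add, add_sub_cancel]
  have hgrad : trace (Θ'⁻¹ * (Θ - Θ')) =
      trace (S * (Θ - Θ')) + 1 / η * trace ((Θ' - A) * (Θ - Θ')) := by
    rw [hstat, Matrix.add_mul, trace_add, Matrix.smul_mul, trace_smul, smul_eq_mul]
  have hquad := mul_le_mul_of_nonneg_left hfrob (by positivity : 0 ≤ 1 / (2 * η))
  rw [mul_add, show ∀ t : ℝ, 1 / (2 * η) * (2 * t) = 1 / η * t by intro t; field_simp] at hquad
  simp only [admmObjective]
  linarith

end

theorem stmt_9_general (p : ℕ) (S A : Matrix (Fin p) (Fin p) ℝ)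
    (η : ℝ) (hη : 0 < η)
    (Q : Matrix (Fin p) (Fin p) ℝ) (hQ : Qᵀ * Q = 1) (hQ' : Q * Qᵀ = 1)
    (lam : Fin p → ℝ)
    (hdecomp : (1 / η) • A - S = Q * Matrix.diagonal lam * Qᵀ)
    (v : Fin p → ℝ) (hv : v = fun j => η * (lam j + Real.sqrt (lam j ^ 2 + 4 / η)) / 2)
    (Θstar : Matrix (Fin p) (Fin p) ℝ) (hΘstar : Θstar = Q * Matrix.diagonal v * Qᵀ)
    (f : Matrix (Fin p) (Fin p) ℝ → ℝ)
    (hf : f = fun Θ => Matrix.trace (S * Θ) - Real.log Θ.det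
      + (1 / (2 * η)) * ∑ i, ∑ j, (Θ i j - A i j) ^ 2) :
    ∀ Θ : Matrix (Fin p) (Fin p) ℝ, Θ.PosDef → f Θstar ≤ f Θ := by
  replace hv : v = fun j => admmRoot η (lam j) := hv
  replace hf : f = admmObjective S A η := hf
  have hvpos : ∀ j, 0 < v j := by simp [hv, admmRoot_pos hη]
  have hstat : Θstar⁻¹ = S + (1 / η) • (Θstar - A) := by
    calc Θstar⁻¹ = Q * diagonal v⁻¹ * Qᵀ :=
          hΘstar ▸ inv_mul_diagonal_mul_transpose hQ hQ' fun j => (hvpos j).ne'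
      _ = Q * diagonal ((1 / η) • v - lam) * Qᵀ := by
          congr; funext j; simp [hv, inv_admmRoot hη, div_eq_inv_mul]
      _ = (1 / η) • Θstar - Q * diagonal lam * Qᵀ := by
          rw [hΘstar, ← Matrix.smul_mul, ← Matrix.mul_smul, ← Matrix.sub_mul, ← Matrix.mul_sub,
            ← diagonal_smul, diagonal_sub]
          rfl
      _ = S + (1 / η) • (Θstar - A) := by rw [← hdecomp, smul_sub]; abel
  have hmin := isMinOn_admmObjective_of_inv_eq hη
    (hΘstar ▸ posDef_mul_diagonal_mul_transpose hQ' hvpos) hstat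
  exact fun Θ hΘ => hf ▸ hmin hΘ

/-- The closed-form ADMM Θ-update minimizes the objective
`f(Θ) = trace(SΘ) − log det Θ + (1/(2η))‖Θ − A‖_F²` over symmetric positive
definite matrices: with `(1/η)A − S = QΛQᵀ`, `Q` orthogonal, the minimizer is
`Θ* = Q·diag(v)·Qᵀ` with `v_j = η(λ_j + √(λ_j² + 4/η))/2`. -/
theorem stmt_9 (p : ℕ) (S A : Matrix (Fin p) (Fin p) ℝ)
    (hS : S.IsSymm) (hA : A.IsSymm) (η : ℝ) (hη : 0 < η)
    (Q : Matrix (Fin p) (Fin p) ℝ) (hQ : Qᵀ * Q = 1) (hQ' : Q * Qᵀ = 1)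
    (lam : Fin p → ℝ)
    (hdecomp : (1 / η) • A - S = Q * Matrix.diagonal lam * Qᵀ)
    (v : Fin p → ℝ) (hv : v = fun j => η * (lam j + Real.sqrt (lam j ^ 2 + 4 / η)) / 2)
    (Θstar : Matrix (Fin p) (Fin p) ℝ) (hΘstar : Θstar = Q * Matrix.diagonal v * Qᵀ)
    (f : Matrix (Fin p) (Fin p) ℝ → ℝ)
    (hf : f = fun Θ => Matrix.trace (S * Θ) - Real.log Θ.det
      + (1 / (2 * η)) * ∑ i, ∑ j, (Θ i j - A i j) ^ 2) :
    ∀ Θ : Matrix (Fin p) (Fin p) ℝ, Θ.PosDef → f Θstar ≤ f Θ :=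
  stmt_9_general p S A η hη Q hQ hQ' lam hdecomp v hv Θstar hΘstar f hf
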